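/- arXiv:0804.2032 — 3 statements merged into one kernel-verified Lean document; each statement's English description precedes it below -/
import Mathlib

section
/- Let T be a 1-optimal out-branching of a digraph D with |Leaf(T)| ≤ k − 1, and suppose that for all vertices z ∈ V(D) it holds that |Head(Back_D^T(z))| ≤ 3k − 1. Then D has a tree decomposition of width at most 6k − 5. -/
/-- A (finite, loopless) directed graph, given by its vertex set and arc set. -/
structure DirGraph (V : Type) where
  verts : Set V
  arcs : Set (V × V)

namespace DirGraph

variable {V : Type}

/-- Every arc joins two distinct vertices of the digraph. -/
def WellFormed (D : DirGraph V) : Prop :=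
  ∀ a ∈ D.arcs, a.1 ∈ D.verts ∧ a.2 ∈ D.verts ∧ a.1 ≠ a.2

/-- `T` is a subgraph of `D`. -/
def IsSubgraph (T D : DirGraph V) : Prop :=
  T.verts ⊆ D.verts ∧ T.arcs ⊆ D.arcs

/-- The in-degree of a vertex. -/
noncomputable def inDeg (D : DirGraph V) (v : V) : ℕ :=
  {a ∈ D.arcs | a.2 = v}.ncard

/-- The out-degree of a vertex. -/
noncomputable def outDeg (D : DirGraph V) (v : V) : ℕ :=
  {a ∈ D.arcs | a.1 = v}.ncard

/-- A dipath in `D`: a nonempty list of distinct vertices of `D`,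
consecutive ones being joined by arcs of `D`. -/
def IsDipath (D : DirGraph V) (l : List V) : Prop :=
  l ≠ [] ∧ l.Nodup ∧ (∀ v ∈ l, v ∈ D.verts) ∧
    l.Chain' (fun u v => (u, v) ∈ D.arcs)

/-- `v` is reachable from `u` by a dipath of `D` (in particular,
every vertex of `D` reaches itself). -/
def Reaches (D : DirGraph V) (u v : V) : Prop :=
  ∃ l : List V, D.IsDipath l ∧ l.head? = some u ∧ l.getLast? = some v

/-- `R_D(u)`: the set of vertices reachable from `u` in `D`. -/
def reachSet (D : DirGraph V) (u : V) : Set V := {v | D.Reaches u v}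

/-- `T` is an out-tree with root `r`: `r` is the only vertex of in-degree 0,
every other vertex has in-degree 1, and the underlying graph is a tree
(equivalently, under the degree conditions, every vertex is reachable from `r`). -/
structure IsOutTree (T : DirGraph V) (r : V) : Prop where
  arcs_mem : ∀ a ∈ T.arcs, a.1 ∈ T.verts ∧ a.2 ∈ T.verts
  root_mem : r ∈ T.verts
  root_indeg : T.inDeg r = 0
  indeg_one : ∀ v ∈ T.verts, v ≠ r → T.inDeg v = 1
  reach_root : ∀ v ∈ T.verts, T.Reaches r v

/-- `T` is an out-tree of the digraph `D`, with root `r`. -/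
def IsOutTreeOf (T D : DirGraph V) (r : V) : Prop :=
  T.IsOutTree r ∧ T.IsSubgraph D

/-- `T` is an out-branching (spanning out-tree) of `D`, with root `r`. -/
def IsOutBranching (T D : DirGraph V) (r : V) : Prop :=
  T.IsOutTreeOf D r ∧ T.verts = D.verts

/-- `Leaf(T)`: the vertices of out-degree 0. -/
def leaves (T : DirGraph V) : Set V := {v ∈ T.verts | T.outDeg v = 0}

/-- `Branch(T)`: the vertices of out-degree at least 2. -/
def branchVerts (T : DirGraph V) : Set V := {v ∈ T.verts | 2 ≤ T.outDeg v}

/-- `BrSucc(T)`: the vertices whose in-neighbor in `T` is a branch vertex. -/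
def brSucc (T : DirGraph V) : Set V := {v | ∃ u, (u, v) ∈ T.arcs ∧ 2 ≤ T.outDeg u}

/-- `Head(B)`: the set of heads of the arcs in `B`. -/
def heads (B : Set (V × V)) : Set V := Prod.snd '' B

/-- `Back_D^T(z) = {(u,v) ∈ A(D) : v ≺_T z ⪯_T u}`. -/
def backArcs (D T : DirGraph V) (z : V) : Set (V × V) :=
  {a ∈ D.arcs | (T.Reaches a.2 z ∧ a.2 ≠ z) ∧ T.Reaches z a.1}

/-- The 1-change for `(u,v)`: add the arc `(u,v)` and delete the arc of `T`
with head `v`. -/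
def oneChange (T : DirGraph V) (u v : V) : DirGraph V :=
  ⟨T.verts, {a ∈ T.arcs | a.2 ≠ v} ∪ {(u, v)}⟩

/-- `ℓ(D)`: the maximum number of leaves over all out-trees of `D`. -/
noncomputable def ell (D : DirGraph V) : ℕ :=
  sSup {k | ∃ (T : DirGraph V) (r : V), IsOutTreeOf T D r ∧ (leaves T).ncard = k}

/-- `ℓ_s(D)`: the maximum number of leaves over all out-branchings of `D`. -/
noncomputable def ellS (D : DirGraph V) : ℕ :=
  sSup {k | ∃ (T : DirGraph V) (r : V), IsOutBranching T D r ∧ (leaves T).ncard = k}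

/-- An arc is useless if no out-branching of `D` contains it. -/
def Useless (D : DirGraph V) (a : V × V) : Prop :=
  ∀ (T : DirGraph V) (r : V), IsOutBranching T D r → a ∉ T.arcs

/-- `T` is a 1-optimal out-branching of `D`: no 1-change for an arc of
`A(D) \ A(T)` results in an out-branching with more leaves. -/
def IsOneOptimal (T D : DirGraph V) (r : V) : Prop :=
  IsOutBranching T D r ∧
    ∀ u v : V, (u, v) ∈ D.arcs → (u, v) ∉ T.arcs → v ≠ r →
      ∀ r' : V, IsOutBranching (oneChange T u v) D r' →
        (leaves (oneChange T u v)).ncard ≤ (leaves T).ncard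

/-- `(X, U)` is a tree decomposition of the digraph `D`: `U` is a tree,
every vertex of `D` is in some bag, both endpoints of every arc are in a
common bag, and for every vertex the set of nodes whose bags contain it
induces a subtree (a connected subgraph) of `U`. -/
structure IsTreeDecomp {ι : Type} (D : DirGraph V) (U : SimpleGraph ι) (X : ι → Set V) :
    Prop where
  tree : U.IsTree
  mem_bag : ∀ v ∈ D.verts, ∃ i, v ∈ X i
  arc_bag : ∀ a ∈ D.arcs, ∃ i, a.1 ∈ X i ∧ a.2 ∈ X i
  bag_connected : ∀ (v : V) (i j : ι), v ∈ X i → v ∈ X j →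
    Relation.ReflTransGen (fun x y => U.Adj x y ∧ v ∈ X x ∧ v ∈ X y) i j

/-- The underlying undirected graph of `T`, on the vertex set of `T`. -/
def underlying (T : DirGraph V) : SimpleGraph {v // v ∈ T.verts} :=
  SimpleGraph.fromRel fun a b => ((a : V), (b : V)) ∈ T.arcs

/-- The bag `X_v = {u, v} ∪ BrSucc(T) ∪ Leaf(T) ∪ Head(Back_D^T(v))`,
where `u` is the in-neighbor of `v` in `T` (omitted when `v` is the root). -/
def bag (D T : DirGraph V) (v : V) : Set V :=
  {u | (u, v) ∈ T.arcs} ∪ {v} ∪ brSucc T ∪ leaves T ∪ heads (backArcs D T v)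

/-- The set of arcs of a dipath given as a list of vertices. -/
def listArcs (l : List V) : Set (V × V) := {a | a ∈ l.zip l.tail}

end DirGraph

/-!
The decomposition tree is the underlying tree of `T`, with the bag `bag D T v` at `v`.
`BrSucc(T)` and `Leaf(T)` lie in every bag, and a back arc `(u, w)` of `z` is a back arc of every
vertex on the tree path from `w` to `z`; so the bags containing a vertex form a subtree.
An arc `(u, v)` of `D` is covered: it is a tree arc, or a back arc of `u`, or `v ∈ BrSucc(T)`;
in the remaining case the parent of `v` has out-degree one, so the 1-change for `(u, v)` makes it
a leaf, and 1-optimality forces `u` to be a leaf already, hence in the bag of `v`.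
Finally an out-tree with `ℓ` leaves has `|BrSucc(T)| ≤ 2ℓ - 2`, so a bag has at most
`2 + (2ℓ - 2) + ℓ + (3k - 1) ≤ 6k - 4` vertices.
-/

open Relation

theorem List.exists_nodup_isChain_of_reflTransGen {α : Type*} {r : α → α → Prop} {a b : α}
    (h : ReflTransGen r a b) :
    ∃ l : List α, l.Nodup ∧ l.IsChain r ∧ l.head? = some a ∧ l.getLast? = some b := by
  induction h using ReflTransGen.head_induction_on with
  | refl => exact ⟨[b], by simp⟩
  | @head x y hxy _ ih =>
    obtain ⟨l, hnd, hch, hh, hl⟩ := ih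
    by_cases hx : x ∈ l
    · obtain ⟨s, t, rfl⟩ := List.append_of_mem hx
      refine ⟨x :: t, hnd.sublist (List.sublist_append_right _ _), hch.suffix ⟨s, rfl⟩, rfl,
        ?_⟩
      rwa [List.getLast?_append_of_ne_nil _ (List.cons_ne_nil _ _)] at hl
    · obtain ⟨t, rfl⟩ := List.head?_eq_some_iff.1 hh
      exact ⟨x :: y :: t, List.nodup_cons.2 ⟨hx, hnd⟩, hch.cons_cons hxy, rfl, by simpa using hl⟩

theorem Relation.ReflTransGen.restrict {α : Type*} {r : α → α → Prop} {P : α → Prop}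
    {a b : α} (h : ReflTransGen r a b) (hP : ∀ c, ReflTransGen r a c → ReflTransGen r c b → P c) :
    ReflTransGen (fun x y => r x y ∧ P x ∧ P y) a b := by
  induction h with
  | refl => exact .refl
  | @tail c d hac hcd ih =>
    exact .tail (ih fun e hae hec => hP e hae (hec.tail hcd))
      ⟨hcd, hP c hac (.single hcd), hP d (hac.tail hcd) .refl⟩

theorem Set.ncard_setOf_eq_card_filter {α : Type*} [Fintype α] (p : α → Prop)
    [DecidablePred p] : {x | p x}.ncard = (Finset.univ.filter p).card := by
  rw [← Set.ncard_coe_finset, Finset.coe_filter_univ]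

namespace DirGraph

variable {V : Type} {D T : DirGraph V} {r u v w x : V}

def Adj (T : DirGraph V) (a b : V) : Prop := (a, b) ∈ T.arcs

theorem reaches_iff (hT : ∀ a ∈ T.arcs, a.1 ∈ T.verts ∧ a.2 ∈ T.verts) :
    T.Reaches u v ↔ u ∈ T.verts ∧ ReflTransGen T.Adj u v := by
  constructor
  · rintro ⟨l, ⟨-, -, hmem, hch⟩, hu, hv⟩
    obtain ⟨t, rfl⟩ := List.head?_eq_some_iff.1 hu
    refine ⟨hmem u List.mem_cons_self,
      List.relationReflTransGen_of_exists_isChain_cons t hch ?_⟩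
    simpa [List.getLast?_eq_some_getLast] using hv
  · rintro ⟨hu, h⟩
    obtain ⟨l, hnd, hch, hl, hr⟩ := List.exists_nodup_isChain_of_reflTransGen h
    obtain ⟨t, rfl⟩ := List.head?_eq_some_iff.1 hl
    refine ⟨u :: t, ⟨List.cons_ne_nil _ _, hnd, ?_, hch⟩, hl, hr⟩
    exact hch.induction (· ∈ T.verts) _ (fun _ _ hxy _ => (hT _ hxy).2) (fun _ => hu)

namespace IsOutTree

theorem reaches_iff (hT : T.IsOutTree r) :
    T.Reaches u v ↔ u ∈ T.verts ∧ ReflTransGen T.Adj u v :=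
  DirGraph.reaches_iff hT.arcs_mem

theorem reflTransGen_root (hT : T.IsOutTree r) (hv : v ∈ T.verts) : ReflTransGen T.Adj r v :=
  (hT.reaches_iff.1 (hT.reach_root v hv)).2

theorem not_adj_root [Finite V] (hT : T.IsOutTree r) : ¬ T.Adj u r := by
  intro h
  have h0 := hT.root_indeg
  rw [inDeg, Set.ncard_eq_zero] at h0
  exact h0.subset ⟨h, rfl⟩

theorem exists_adj [Finite V] (hT : T.IsOutTree r) (hv : v ∈ T.verts) (hvr : v ≠ r) :
    ∃ u, T.Adj u v := by
  obtain ⟨a, ha⟩ := Set.ncard_eq_one.1 (hT.indeg_one v hv hvr)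
  obtain ⟨hmem, rfl⟩ : a ∈ {a ∈ T.arcs | a.2 = v} := ha ▸ rfl
  exact ⟨a.1, hmem⟩

theorem eq_of_adj [Finite V] (hT : T.IsOutTree r) (hu : T.Adj u v) (hw : T.Adj w v) :
    u = w := by
  have hvr : v ≠ r := by rintro rfl; exact hT.not_adj_root hu
  have h₁ := (hT.indeg_one v (hT.arcs_mem _ hu).2 hvr).le
  exact congrArg Prod.fst ((Set.ncard_le_one (Set.toFinite _)).1 h₁ _ ⟨hu, rfl⟩ _ ⟨hw, rfl⟩)

theorem not_transGen_self [Finite V] (hT : T.IsOutTree r) : ¬ TransGen T.Adj v v := by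
  intro hv
  obtain ⟨c, -, hcv⟩ := TransGen.tail'_iff.1 hv
  -- lying on a cycle passes from a vertex to its parent, and the root has no parent
  suffices ∀ y, ReflTransGen T.Adj r y → ¬ TransGen T.Adj y y from
    this v (hT.reflTransGen_root (hT.arcs_mem _ hcv).2) hv
  intro y hy
  induction hy with
  | refl =>
    intro h
    obtain ⟨c, -, hc⟩ := TransGen.tail'_iff.1 h
    exact hT.not_adj_root hc
  | @tail c d _ hcd ih =>
    intro h
    obtain ⟨e, hde, hed⟩ := TransGen.tail'_iff.1 h
    obtain rfl := hT.eq_of_adj hed hcd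
    exact ih (TransGen.head' hcd hde)

theorem ne_of_adj [Finite V] (hT : T.IsOutTree r) (h : T.Adj u v) : u ≠ v := by
  rintro rfl
  exact hT.not_transGen_self (.single h)

theorem ncard_arcs_add_one [Finite V] (hT : T.IsOutTree r) :
    T.arcs.ncard + 1 = T.verts.ncard := by
  have hinj : Set.InjOn Prod.snd T.arcs := fun a ha b hb hab =>
    Prod.ext (hT.eq_of_adj (v := a.2) ha (hab ▸ hb)) hab
  have himg : Prod.snd '' T.arcs = T.verts \ {r} := by
    ext v
    refine ⟨?_, fun ⟨hv, hvr⟩ => ?_⟩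
    · rintro ⟨a, ha, rfl⟩
      exact ⟨(hT.arcs_mem a ha).2, fun h => hT.not_adj_root (u := a.1) (h ▸ ha)⟩
    · obtain ⟨u, hu⟩ := hT.exists_adj hv hvr
      exact ⟨(u, v), hu, rfl⟩
  rw [← hinj.ncard_image, himg, Set.ncard_sdiff_singleton_add_one hT.root_mem]

end IsOutTree

theorem outDeg_eq_zero_iff [Finite V] : T.outDeg u = 0 ↔ ∀ v, ¬ T.Adj u v := by
  rw [outDeg, Set.ncard_eq_zero, Set.eq_empty_iff_forall_notMem]
  exact ⟨fun h v hv => h (u, v) ⟨hv, rfl⟩, fun h a ha => h a.2 (ha.2 ▸ ha.1)⟩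

theorem eq_of_adj_of_outDeg_eq_one [Finite V] (hu : T.outDeg u = 1) (hv : T.Adj u v)
    (hw : T.Adj u w) : w = v :=
  congrArg Prod.snd ((Set.ncard_le_one (Set.toFinite _)).1 hu.le _ ⟨hw, rfl⟩ _ ⟨hv, rfl⟩)

theorem ncard_arcs_filter_eq_sum [Fintype V] (p : V → Prop) [DecidablePred p] :
    {a ∈ T.arcs | p a.1}.ncard = ∑ v with p v, T.outDeg v := by
  classical
  rw [Set.ncard_setOf_eq_card_filter, Finset.card_eq_sum_card_fiberwise (f := Prod.fst)
    (t := Finset.univ.filter p) (fun a ha => by simp_all)]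
  refine Finset.sum_congr rfl fun v hv => ?_
  rw [outDeg, Set.ncard_setOf_eq_card_filter, Finset.filter_filter]
  congr 1
  ext a
  simp only [Finset.mem_filter, Finset.mem_univ, true_and] at hv ⊢
  exact ⟨fun ⟨⟨h, _⟩, h'⟩ => ⟨h, h'⟩, fun ⟨h, h'⟩ => ⟨⟨h, h' ▸ hv⟩, h'⟩⟩

theorem IsOutTree.ncard_brSucc_add_two_le [Fintype V] (hT : T.IsOutTree r) :
    (brSucc T).ncard + 2 ≤ 2 * (leaves T).ncard := by
  classical
  have hsum : ∑ v, T.outDeg v + 1 = (Finset.univ.filter (· ∈ T.verts)).card := by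
    have := ncard_arcs_filter_eq_sum (T := T) (fun _ => True)
    simp only [Set.sep_true, Finset.filter_true] at this
    rw [← this, hT.ncard_arcs_add_one, ← Set.ncard_setOf_eq_card_filter, Set.ofPred_mem_eq]
  have hbr : (brSucc T).ncard ≤ ∑ v with 2 ≤ T.outDeg v, T.outDeg v := by
    rw [← ncard_arcs_filter_eq_sum]
    have : brSucc T = Prod.snd '' {a ∈ T.arcs | 2 ≤ T.outDeg a.1} := by
      ext v; simp [brSucc]
    exact this ▸ Set.ncard_image_le (Set.toFinite _)
  -- summed over `v`, this reads `Σ_{2 ≤ d⁺(v)} d⁺(v) + 2 |V(T)| ≤ 2 |Leaf(T)| + 2 |A(T)|`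
  have hpoint : ∀ v ∈ Finset.univ, (if 2 ≤ T.outDeg v then T.outDeg v else 0) +
      2 * (if v ∈ T.verts then 1 else 0) ≤
      2 * (if v ∈ leaves T then 1 else 0) + 2 * T.outDeg v := by
    intro v _
    by_cases hv : v ∈ T.verts
    · simp only [leaves, Set.mem_ofPred_eq, hv, true_and]; split_ifs <;> omega
    · have : T.outDeg v = 0 := outDeg_eq_zero_iff.2 fun w h => hv (hT.arcs_mem _ h).1
      simp [this, hv, leaves]
  have := Finset.sum_le_sum hpoint
  simp only [Finset.sum_add_distrib, ← Finset.mul_sum, Finset.sum_boole, ← Finset.sum_filter,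
    Nat.cast_id] at this
  rw [← Set.ncard_setOf_eq_card_filter (· ∈ leaves T), Set.ofPred_mem_eq] at this
  omega

theorem adj_oneChange_iff :
    (T.oneChange u v).Adj x w ↔ T.Adj x w ∧ w ≠ v ∨ x = u ∧ w = v := by
  simp [Adj, oneChange, or_comm]

theorem isOutBranching_oneChange [Finite V] (hD : D.WellFormed) (hT : IsOutBranching T D r)
    (huv : (u, v) ∈ D.arcs) (hvr : v ≠ r) (hvu : ¬ T.Reaches v u) :
    IsOutBranching (T.oneChange u v) D r := by
  obtain ⟨⟨hT, hsub⟩, hverts⟩ := hT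
  have hu : u ∈ T.verts := hverts ▸ (hD _ huv).1
  have hv : v ∈ T.verts := hverts ▸ (hD _ huv).2.1
  set T' := T.oneChange u v
  have harcs' : ∀ a ∈ T'.arcs, a.1 ∈ T'.verts ∧ a.2 ∈ T'.verts := by
    rintro ⟨a, b⟩ hab
    rcases adj_oneChange_iff.1 hab with ⟨h, -⟩ | ⟨rfl, rfl⟩
    exacts [hT.arcs_mem _ h, ⟨hu, hv⟩]
  have hin_v : {a ∈ T'.arcs | a.2 = v} = {(u, v)} := by
    ext ⟨a, b⟩
    simp only [T', oneChange, Set.mem_union, Set.mem_ofPred_eq, Set.mem_singleton_iff,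
      Prod.mk.injEq]
    tauto
  have hin_ne : ∀ w ≠ v, {a ∈ T'.arcs | a.2 = w} = {a ∈ T.arcs | a.2 = w} := by
    intro w hw
    ext ⟨a, b⟩
    simp only [T', oneChange, Set.mem_union, Set.mem_ofPred_eq, Set.mem_singleton_iff,
      Prod.mk.injEq]
    constructor
    · rintro ⟨⟨h, -⟩ | ⟨-, rfl⟩, rfl⟩
      exacts [⟨h, rfl⟩, absurd rfl hw]
    · rintro ⟨h, rfl⟩
      exact ⟨.inl ⟨h, hw⟩, rfl⟩
  -- vertices not below `v` keep their root path, those below `v` are reached through `(u, v)`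
  have hkeep : ∀ y, ReflTransGen T.Adj r y → ¬ ReflTransGen T.Adj v y →
      ReflTransGen T'.Adj r y := by
    intro y hy hvy
    induction hy with
    | refl => exact .refl
    | @tail c d _ hcd ih =>
      refine .tail (ih fun hvc => hvy (hvc.tail hcd)) (adj_oneChange_iff.2 (.inl ⟨hcd, ?_⟩))
      rintro rfl; exact hvy .refl
  have hbelow : ∀ y, ReflTransGen T.Adj v y → ReflTransGen T'.Adj v y := by
    intro y hy
    induction hy with
    | refl => exact .refl
    | @tail c d hvc hcd ih =>
      refine .tail ih (adj_oneChange_iff.2 (.inl ⟨hcd, ?_⟩))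
      rintro rfl; exact hT.not_transGen_self (TransGen.tail' hvc hcd)
  refine ⟨⟨⟨harcs', hT.root_mem, ?_, fun w hw hwr => ?_, fun w hw => ?_⟩, hsub.1, ?_⟩, hverts⟩
  · rw [inDeg, hin_ne r hvr.symm]; exact hT.root_indeg
  · by_cases hwv : w = v
    · rw [inDeg, hwv, hin_v, Set.ncard_singleton]
    · rw [inDeg, hin_ne w hwv]; exact hT.indeg_one w hw hwr
  · refine (reaches_iff harcs').2 ⟨hT.root_mem, ?_⟩
    by_cases hvw : ReflTransGen T.Adj v w
    · have hru := hkeep u (hT.reflTransGen_root hu) fun h => hvu (hT.reaches_iff.2 ⟨hv, h⟩)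
      exact (hru.tail (adj_oneChange_iff.2 (.inr ⟨rfl, rfl⟩))).trans (hbelow w hvw)
    · exact hkeep w (hT.reflTransGen_root hw) hvw
  · rintro ⟨a, b⟩ hab
    rcases adj_oneChange_iff.1 hab with ⟨h, -⟩ | ⟨rfl, rfl⟩
    exacts [hsub.2 h, huv]

theorem ncard_leaves_lt_oneChange [Finite V] (hw : T.Adj w v) (hwT : w ∈ T.verts)
    (hw1 : T.outDeg w = 1) (hu : u ∉ leaves T) (huv : ¬ T.Adj u v) :
    (leaves T).ncard < (leaves (T.oneChange u v)).ncard := by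
  have hwu : w ≠ u := by rintro rfl; exact huv hw
  refine Set.ncard_lt_ncard (Set.ssubset_iff_insert.2 ⟨w, fun h => ?_, fun z hz => ?_⟩)
  · exact outDeg_eq_zero_iff.1 h.2 v hw
  rcases Set.mem_insert_iff.1 hz with rfl | hz
  · refine ⟨hwT, outDeg_eq_zero_iff.2 fun y hy => ?_⟩
    rcases adj_oneChange_iff.1 hy with ⟨hy, hyv⟩ | ⟨rfl, -⟩
    exacts [hyv (eq_of_adj_of_outDeg_eq_one hw1 hw hy), hwu rfl]
  · refine ⟨hz.1, outDeg_eq_zero_iff.2 fun y hy => ?_⟩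
    rcases adj_oneChange_iff.1 hy with ⟨hy, -⟩ | ⟨rfl, -⟩
    exacts [outDeg_eq_zero_iff.1 hz.2 y hy, hu hz]

theorem card_edgeSet_underlying_le [Finite V] (T : DirGraph V) :
    Nat.card (underlying T).edgeSet ≤ T.arcs.ncard := by
  have hmem : ∀ e ∈ (underlying T).edgeSet,
      e.map Subtype.val ∈ Function.uncurry Sym2.mk '' T.arcs := by
    intro e he
    induction e using Sym2.ind with | _ i j => ?_
    rcases ((SimpleGraph.fromRel_adj _ _ _).1 ((underlying T).mem_edgeSet.1 he)).2 with h | h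
    exacts [⟨(i, j), h, rfl⟩, ⟨(j, i), h, Sym2.eq_swap⟩]
  calc Nat.card (underlying T).edgeSet ≤ Nat.card (Function.uncurry Sym2.mk '' T.arcs) :=
        Nat.card_le_card_of_injective (fun e => ⟨e.1.map Subtype.val, hmem e.1 e.2⟩)
          fun _ _ h => Subtype.ext
            (Sym2.map.injective Subtype.val_injective (congrArg Subtype.val h))
    _ = (Function.uncurry Sym2.mk '' T.arcs).ncard := Nat.card_coe_set_eq _
    _ ≤ T.arcs.ncard := Set.ncard_image_le (Set.toFinite _)

namespace IsOutTree

theorem underlying_adj [Finite V] (hT : T.IsOutTree r) {a b : {x // x ∈ T.verts}}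
    (h : T.Adj a b) : (underlying T).Adj a b :=
  (SimpleGraph.fromRel_adj _ _ _).2
    ⟨fun hab => hT.ne_of_adj h (congrArg Subtype.val hab), .inl h⟩

theorem mem_verts_of_reflTransGen (hT : T.IsOutTree r) (hu : u ∈ T.verts)
    (h : ReflTransGen T.Adj u v) : v ∈ T.verts := by
  induction h with
  | refl => exact hu
  | tail _ hbc _ => exact (hT.arcs_mem _ hbc).2

theorem reflTransGen_underlying [Finite V] (hT : T.IsOutTree r) {P : V → Prop} {a b : V}
    (ha : a ∈ T.verts) (hb : b ∈ T.verts)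
    (h : ReflTransGen (fun x y => T.Adj x y ∧ P x ∧ P y) a b) :
    ReflTransGen (fun i j : {x // x ∈ T.verts} => (underlying T).Adj i j ∧ P i ∧ P j)
      ⟨a, ha⟩ ⟨b, hb⟩ := by
  induction h using ReflTransGen.head_induction_on with
  | refl => exact .refl
  | @head a c hac _ ih =>
    have hc := (hT.arcs_mem _ hac.1).2
    exact .head (b := ⟨c, hc⟩) ⟨hT.underlying_adj hac.1, hac.2⟩ (ih hc)

theorem connected_underlying [Finite V] (hT : T.IsOutTree r) : (underlying T).Connected := by
  have hroot : ∀ i, (underlying T).Reachable ⟨r, hT.root_mem⟩ i := fun ⟨v, hv⟩ =>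
    (SimpleGraph.reachable_iff_reflTransGen _ _).2 <|
      ReflTransGen.mono (fun _ _ h => h.1) _ _ (hT.reflTransGen_underlying (P := fun _ => True)
        hT.root_mem hv (ReflTransGen.mono (fun _ _ h => ⟨h, trivial, trivial⟩) _ _
          (hT.reflTransGen_root hv)))
  exact (SimpleGraph.connected_iff _).2
    ⟨fun i j => (hroot i).symm.trans (hroot j), ⟨⟨r, hT.root_mem⟩⟩⟩

theorem isTree_underlying [Finite V] (hT : T.IsOutTree r) : (underlying T).IsTree := by
  have hconn := hT.connected_underlying
  refine SimpleGraph.isTree_iff_connected_and_card.2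
    ⟨hconn, le_antisymm ?_ hconn.card_vert_le_card_edgeSet_add_one⟩
  calc Nat.card (underlying T).edgeSet + 1 ≤ T.arcs.ncard + 1 :=
        Nat.add_le_add_right (card_edgeSet_underlying_le T) 1
    _ = T.verts.ncard := hT.ncard_arcs_add_one
    _ = Nat.card {v // v ∈ T.verts} := (Nat.card_coe_set_eq _).symm

theorem reflTransGen_of_forall [Finite V] (hT : T.IsOutTree r) {P : V → Prop} (hP : ∀ v, P v)
    (i j : {x // x ∈ T.verts}) :
    ReflTransGen (fun p q : {x // x ∈ T.verts} => (underlying T).Adj p q ∧ P p ∧ P q) i j :=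
  ReflTransGen.mono (fun _ _ h => ⟨h, hP _, hP _⟩) _ _
    ((SimpleGraph.reachable_iff_reflTransGen _ _).1 (hT.connected_underlying.preconnected i j))

end IsOutTree

theorem mem_bag_self : v ∈ bag D T v := .inl (.inl (.inl (.inr rfl)))

theorem mem_bag_of_adj (h : T.Adj u v) : u ∈ bag D T v := .inl (.inl (.inl (.inl h)))

theorem mem_bag_of_mem_brSucc (h : u ∈ brSucc T) : u ∈ bag D T v := .inl (.inl (.inr h))

theorem mem_bag_of_mem_leaves (h : u ∈ leaves T) : u ∈ bag D T v := .inl (.inr h)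

theorem mem_bag_of_mem_backArcs {a : V × V} (h : a ∈ backArcs D T v) : a.2 ∈ bag D T v :=
  .inr ⟨a, h, rfl⟩

namespace IsOutTree

theorem exists_reflTransGen_of_mem_bag [Finite V] (hT : T.IsOutTree r) {i : {v // v ∈ T.verts}}
    (hx : x ∈ bag D T i) : ∃ hxT : x ∈ T.verts, ReflTransGen (fun p q : {v // v ∈ T.verts} =>
      (underlying T).Adj p q ∧ x ∈ bag D T p ∧ x ∈ bag D T q) ⟨x, hxT⟩ i := by
  obtain ⟨i, hi⟩ := i
  rcases hx with (((hxi | rfl) | hbr) | hleaf) | ⟨a, ⟨haD, ⟨hai, -⟩, hia⟩, rfl⟩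
  · exact ⟨(hT.arcs_mem _ hxi).1, .single ⟨hT.underlying_adj hxi, mem_bag_self, mem_bag_of_adj hxi⟩⟩
  · exact ⟨hi, .refl⟩
  · obtain ⟨w, hw, -⟩ := id hbr
    exact ⟨(hT.arcs_mem _ hw).2, hT.reflTransGen_of_forall (P := (x ∈ bag D T ·))
      (fun _ => mem_bag_of_mem_brSucc hbr) _ _⟩
  · exact ⟨hleaf.1, hT.reflTransGen_of_forall (P := (x ∈ bag D T ·))
      (fun _ => mem_bag_of_mem_leaves hleaf) _ _⟩
  -- each vertex `c` with `a.2 ⪯ c ⪯ i` also has `a` as a back arc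
  obtain ⟨hxT, hpath⟩ := hT.reaches_iff.1 hai
  refine ⟨hxT, hT.reflTransGen_underlying (P := (a.2 ∈ bag D T ·)) hxT hi
    (hpath.restrict fun c hxc hci => ?_)⟩
  by_cases hcx : c = a.2
  · exact hcx ▸ mem_bag_self
  have hcT := hT.mem_verts_of_reflTransGen hxT hxc
  exact mem_bag_of_mem_backArcs ⟨haD, ⟨hT.reaches_iff.2 ⟨hxT, hxc⟩, Ne.symm hcx⟩,
    hT.reaches_iff.2 ⟨hcT, hci.trans (hT.reaches_iff.1 hia).2⟩⟩

theorem bag_connected [Finite V] (hT : T.IsOutTree r) (x : V) (i j : {v // v ∈ T.verts})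
    (hi : x ∈ bag D T i) (hj : x ∈ bag D T j) :
    ReflTransGen (fun p q : {v // v ∈ T.verts} =>
      (underlying T).Adj p q ∧ x ∈ bag D T p ∧ x ∈ bag D T q) i j := by
  obtain ⟨_, hxi⟩ := hT.exists_reflTransGen_of_mem_bag hi
  obtain ⟨_, hxj⟩ := hT.exists_reflTransGen_of_mem_bag hj
  exact (ReflTransGen.mono (fun _ _ h => ⟨h.1.symm, h.2.2, h.2.1⟩) _ _ hxi.swap).trans hxj

theorem ncard_bag_le [Finite V] (hT : T.IsOutTree r) (v : V) :
    (bag D T v).ncard ≤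
      2 + (brSucc T).ncard + (leaves T).ncard + (heads (backArcs D T v)).ncard := by
  have hpar : {u | T.Adj u v}.ncard ≤ 1 :=
    (Set.ncard_le_one (Set.toFinite _)).2 fun _ h₁ _ h₂ => hT.eq_of_adj h₁ h₂
  have h₁ := Set.ncard_union_le {u | T.Adj u v} {v}
  have h₂ := Set.ncard_union_le ({u | T.Adj u v} ∪ {v}) (brSucc T)
  have h₃ := Set.ncard_union_le ({u | T.Adj u v} ∪ {v} ∪ brSucc T) (leaves T)
  have h₄ := Set.ncard_union_le ({u | T.Adj u v} ∪ {v} ∪ brSucc T ∪ leaves T)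
    (heads (backArcs D T v))
  rw [Set.ncard_singleton] at h₁
  change ({u | T.Adj u v} ∪ {v} ∪ brSucc T ∪ leaves T ∪ heads (backArcs D T v)).ncard ≤ _
  omega

end IsOutTree

theorem IsOneOptimal.exists_bag_of_mem_arcs [Finite V] (hD : D.WellFormed)
    (hT : IsOneOptimal T D r) {a : V × V} (ha : a ∈ D.arcs) :
    ∃ v ∈ T.verts, a.1 ∈ bag D T v ∧ a.2 ∈ bag D T v := by
  obtain ⟨u, v⟩ := a
  obtain ⟨hTD, hopt⟩ := hT
  obtain ⟨⟨hT, -⟩, hverts⟩ := id hTD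
  obtain ⟨huD, hvD, huv⟩ : u ∈ D.verts ∧ v ∈ D.verts ∧ u ≠ v := hD _ ha
  rw [← hverts] at huD hvD
  by_cases hTuv : T.Adj u v
  · exact ⟨v, hvD, mem_bag_of_adj hTuv, mem_bag_self⟩
  by_cases hvu : T.Reaches v u
  · exact ⟨u, huD, mem_bag_self, mem_bag_of_mem_backArcs (a := (u, v))
      ⟨ha, ⟨hvu, huv.symm⟩, hT.reaches_iff.2 ⟨huD, .refl⟩⟩⟩
  have hvr : v ≠ r := by rintro rfl; exact hvu (hT.reach_root u huD)
  obtain ⟨w, hw⟩ := hT.exists_adj hvD hvr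
  by_cases hbr : 2 ≤ T.outDeg w
  · exact ⟨u, huD, mem_bag_self, mem_bag_of_mem_brSucc ⟨w, hw, hbr⟩⟩
  -- the 1-change for `(u, v)` makes `w` a leaf, so by 1-optimality `u` must stop being one
  have hw1 : T.outDeg w = 1 := by
    have : T.outDeg w ≠ 0 := fun h => outDeg_eq_zero_iff.1 h v hw
    omega
  have hu : u ∈ leaves T := by
    by_contra hu
    have := hopt u v ha hTuv hvr r (isOutBranching_oneChange hD hTD ha hvr hvu)
    have := ncard_leaves_lt_oneChange hw (hT.arcs_mem _ hw).1 hw1 hu hTuv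
    omega
  exact ⟨v, hvD, mem_bag_of_mem_leaves hu, mem_bag_self⟩

end DirGraph

namespace DirGraph

theorem exists_treeDecomp_of_small_width {V : Type} [Fintype V]
    (D T : DirGraph V) (r : V) (k : ℕ) (hD : D.WellFormed)
    (hT : IsOneOptimal T D r)
    (hleaf : (leaves T).ncard ≤ k - 1)
    (hback : ∀ z ∈ D.verts, (heads (backArcs D T z)).ncard ≤ 3 * k - 1) :
    ∃ (ι : Type) (U : SimpleGraph ι) (X : ι → Set V),
      IsTreeDecomp D U X ∧ ∀ i : ι, (X i).ncard - 1 ≤ 6 * k - 5 := by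
  obtain ⟨⟨hTree, -⟩, hverts⟩ := hT.1
  refine ⟨{v // v ∈ T.verts}, underlying T, fun i => bag D T i,
    ⟨hTree.isTree_underlying, fun v hv => ⟨⟨v, hverts ▸ hv⟩, mem_bag_self⟩, fun a ha => ?_,
      hTree.bag_connected⟩, fun i => ?_⟩
  · obtain ⟨v, hv, hbag⟩ := hT.exists_bag_of_mem_arcs hD ha
    exact ⟨⟨v, hv⟩, hbag⟩
  · dsimp only
    have := hTree.ncard_bag_le (D := D) i
    have := hTree.ncard_brSucc_add_two_le
    have := hback i (hverts ▸ i.2)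
    omega
end DirGraph
end

section
/- For every integer m ≥ 2 there exists a digraph D on 2m + 2 vertices that has at least one out-branching, contains no useless arcs, and satisfies ℓ(D) = 2m and ℓ_s(D) = m (so ℓ(D)/ℓ_s(D) = 2). -/
/-!
The digraph has a source `0`, a hub, and two paths of length `m + 1` from the source to the hub;
the hub dominates every inner vertex of both paths. The star at the hub has `2m` leaves, and
`2m + 1` leaves would need a vertex dominating all others.

An out-branching must be rooted at the source, and the in-neighbour of the hub ends one of the two
paths. That whole path lies in the branching, since entering one of its vertices from the hub would
close a cycle, so its `m + 1` vertices are not leaves. If the hub is not a leaf either, at most the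
`m` inner vertices of the other path remain; if it is, each of those but the last is the
in-neighbour of the next, leaving at most two leaves. Every arc lies in one of the two
out-branchings that follow a path to the hub and then fan out to the inner vertices of the other.
-/

lemma List.IsChain.exists_rel_of_mem_cons {α : Type} {R : α → α → Prop} {a c : α} :
    ∀ {l : List α}, (a :: l).IsChain R → c ∈ l → ∃ s ∈ a :: l, R s c
  | b :: l, h, hc => by
    rw [List.isChain_cons_cons] at h
    rcases List.mem_cons.1 hc with rfl | hc
    · exact ⟨a, List.mem_cons_self, h.1⟩
    · obtain ⟨s, hs, hsc⟩ := exists_rel_of_mem_cons h.2 hc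
      exact ⟨s, List.mem_cons_of_mem a hs, hsc⟩

namespace DirGraph

section Reaches

variable {V : Type} {T : DirGraph V} {l : List V} {u v w : V}

lemma IsDipath.infix (h : T.IsDipath l) {l' : List V} (hl' : l' <:+: l) (hne : l' ≠ []) :
    T.IsDipath l' :=
  ⟨hne, h.2.1.sublist hl'.sublist, fun x hx => h.2.2.1 x (hl'.subset hx), h.2.2.2.infix hl'⟩

lemma Reaches.refl (hv : v ∈ T.verts) : T.Reaches v v :=
  ⟨[v], ⟨by simp, by simp, by simpa, List.isChain_singleton _⟩, rfl, rfl⟩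

lemma Reaches.mem_verts_left (h : T.Reaches u v) : u ∈ T.verts := by
  obtain ⟨l, hl, hu, -⟩ := h
  exact hl.2.2.1 u (List.mem_of_mem_head? hu)

lemma Reaches.cons (ha : (u, v) ∈ T.arcs) (hu : u ∈ T.verts) (h : T.Reaches v w) :
    T.Reaches u w := by
  obtain ⟨l, hl, hv, hw⟩ := h
  by_cases hul : u ∈ l
  · obtain ⟨s, t, rfl⟩ := List.append_of_mem hul
    refine ⟨u :: t, hl.infix (List.suffix_append s _).isInfix (by simp), rfl, ?_⟩
    rwa [List.getLast?_append_of_ne_nil _ (List.cons_ne_nil u t)] at hw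
  · obtain ⟨x, t, rfl⟩ := List.exists_cons_of_ne_nil hl.1
    obtain rfl : x = v := by simpa using hv
    refine ⟨u :: x :: t, ⟨by simp, ?_, ?_, ?_⟩, rfl, by simpa using hw⟩
    · exact List.nodup_cons.2 ⟨hul, hl.2.1⟩
    · simpa [hu] using hl.2.2.1
    · exact List.IsChain.cons_cons ha hl.2.2.2

lemma Reaches.snoc (h : T.Reaches u v) (ha : (v, w) ∈ T.arcs) (hw : w ∈ T.verts) :
    T.Reaches u w := by
  obtain ⟨l, hl, hu, hv⟩ := h
  by_cases hwl : w ∈ l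
  · obtain ⟨s, t, rfl⟩ := List.append_of_mem hwl
    refine ⟨s ++ [w], hl.infix ⟨[], t, by simp⟩ (by simp), ?_, by simp⟩
    cases s <;> simpa using hu
  · refine ⟨l ++ [w], ⟨by simp, ?_, ?_, ?_⟩, ?_, by simp⟩
    · exact List.nodup_append.2 ⟨hl.2.1, List.nodup_singleton w,
        fun x hx y hy => by rintro rfl; exact hwl (List.eq_of_mem_singleton hy ▸ hx)⟩
    · exact fun x hx => (List.mem_append.1 hx).elim (hl.2.2.1 x)
        fun h => List.eq_of_mem_singleton h ▸ hw
    · exact hl.2.2.2.append (List.isChain_singleton w) fun x hx y hy => by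
        obtain rfl := Option.some.inj (hv.symm.trans hx)
        obtain rfl := Option.some.inj hy
        exact ha
    · cases l with
      | nil => exact absurd rfl hl.1
      | cons a s' => simpa using hu

lemma Reaches.exists_mem_arcs (h : T.Reaches u v) (huv : u ≠ v) : ∃ x, (u, x) ∈ T.arcs := by
  obtain ⟨l, hl, hu, hv⟩ := h
  match l, hl, hu, hv with
  | [_], _, hu, hv => exact absurd ((Option.some.inj hu).symm.trans (Option.some.inj hv)) huv
  | _ :: x :: _, hl, hu, _ =>
    obtain rfl := Option.some.inj hu
    exact ⟨x, (List.isChain_cons_cons.1 hl.2.2.2).1⟩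

end Reaches

section OutTree

variable {V : Type} {D T : DirGraph V} {p r u v w : V}

lemma IsOutTree.exists_mem_arcs (hT : T.IsOutTree r) (hv : v ∈ T.verts) (hvr : v ≠ r) :
    ∃ u, (u, v) ∈ T.arcs := by
  obtain ⟨a, ha⟩ := Set.ncard_eq_one.1 (hT.indeg_one v hv hvr)
  obtain ⟨haT, rfl⟩ : a ∈ {a ∈ T.arcs | a.2 = v} := ha ▸ rfl
  exact ⟨a.1, haT⟩

lemma IsOutBranching.eq_root (hT : T.IsOutBranching D r) (hv : v ∈ D.verts)
    (hin : ∀ u, (u, v) ∉ D.arcs) : v = r := by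
  by_contra hvr
  obtain ⟨u, hu⟩ := hT.1.1.exists_mem_arcs (hT.2 ▸ hv) hvr
  exact hin u (hT.1.2.2 hu)

variable [Finite V]

lemma notMem_leaves_of_mem_arcs (ha : (u, v) ∈ T.arcs) : u ∉ T.leaves := fun hu =>
  ((Set.ncard_eq_zero (Set.toFinite _)).1 hu.2).subset ⟨ha, rfl⟩

lemma IsOutTree.notMem_arcs_root (hT : T.IsOutTree r) : (u, r) ∉ T.arcs := fun ha =>
  ((Set.ncard_eq_zero (Set.toFinite _)).1 hT.root_indeg).subset ⟨ha, rfl⟩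

lemma IsOutTree.eq_of_mem_arcs (hT : T.IsOutTree r) {u' : V} (h : (u, v) ∈ T.arcs)
    (h' : (u', v) ∈ T.arcs) : u = u' := by
  have hvr : v ≠ r := by rintro rfl; exact hT.notMem_arcs_root h
  obtain ⟨a, ha⟩ := Set.ncard_eq_one.1 (hT.indeg_one v (hT.arcs_mem _ h).2 hvr)
  have hu : (u, v) ∈ ({a} : Set (V × V)) := ha ▸ ⟨h, rfl⟩
  have hu' : (u', v) ∈ ({a} : Set (V × V)) := ha ▸ ⟨h', rfl⟩
  exact congrArg Prod.fst (hu.trans hu'.symm)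

lemma IsOutTree.not_reaches_of_mem_arcs (hT : T.IsOutTree r) (ha : (u, v) ∈ T.arcs) :
    ¬ T.Reaches v u := by
  rintro ⟨l, hl, hv, hu⟩
  obtain ⟨x, t, rfl⟩ := List.exists_cons_of_ne_nil hl.1
  obtain rfl : x = v := by simpa using hv
  -- Every vertex of the cycle has its unique in-neighbour on the cycle, so no arc enters the
  -- cycle from outside; but the dipath from the root does.
  have hpred : ∀ c ∈ x :: t, ∃ s ∈ x :: t, (s, c) ∈ T.arcs := by
    rintro c (_ | ⟨_, hc⟩)
    · exact ⟨u, List.mem_of_mem_getLast? hu, ha⟩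
    · exact hl.2.2.2.exists_rel_of_mem_cons hc
  obtain ⟨lr, hlr, hr, hx⟩ := hT.reach_root x (hl.2.2.1 x List.mem_cons_self)
  have hout : ∀ y ∈ lr, y ∉ x :: t := by
    refine hlr.2.2.2.induction _ _ (fun y z hyz hy hz => hy ?_) (fun hne hr' => ?_)
    · obtain ⟨s, hs, hsz⟩ := hpred z hz
      exact hT.eq_of_mem_arcs hyz hsz ▸ hs
    · obtain ⟨s, -, hs⟩ := hpred _ hr'
      rw [List.head?_eq_some_head hne] at hr
      exact hT.notMem_arcs_root (Option.some.inj hr ▸ hs)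
  exact hout x (List.mem_of_mem_getLast? hx) List.mem_cons_self

lemma IsOutTree.mem_arcs_of_reaches (hT : T.IsOutTree r) (hvr : v ≠ r) (hvw : T.Reaches v w)
    (hin : ∀ u, (u, v) ∈ T.arcs → u = p ∨ u = w) : (p, v) ∈ T.arcs := by
  obtain ⟨u, hu⟩ := hT.exists_mem_arcs hvw.mem_verts_left hvr
  rcases hin u hu with rfl | rfl
  · exact hu
  · exact absurd hvw (hT.not_reaches_of_mem_arcs hu)

/-- A path `f 0 → ⋯ → f n → w` is forced into `T` once `T` contains its last arc and the only
other possible in-neighbour of each `f (i + 1)` is `w`: choosing `w` would close a cycle. -/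
lemma IsOutTree.mem_arcs_of_forced (hT : T.IsOutTree r) (f : ℕ → V) (n : ℕ)
    (hn : (f n, w) ∈ T.arcs)
    (hf : ∀ i < n, f (i + 1) ≠ r ∧ ∀ u, (u, f (i + 1)) ∈ T.arcs → u = f i ∨ u = w) :
    ∀ i < n, (f i, f (i + 1)) ∈ T.arcs := by
  have hreach : ∀ i ≤ n, T.Reaches (f i) w := by
    intro i hi
    induction hi using Nat.decreasingInduction with
    | self => exact .cons hn (hT.arcs_mem _ hn).1 (Reaches.refl (hT.arcs_mem _ hn).2)
    | of_succ i hi ih =>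
      have ha := hT.mem_arcs_of_reaches (hf i hi).1 ih (hf i hi).2
      exact .cons ha (hT.arcs_mem _ ha).1 ih
  exact fun i hi => hT.mem_arcs_of_reaches (hf i hi).1 (hreach (i + 1) hi) (hf i hi).2

lemma IsOutTree.root_notMem_leaves (hT : T.IsOutTree r) (hv : v ∈ T.verts) (hvr : v ≠ r) :
    r ∉ T.leaves := by
  obtain ⟨x, hx⟩ := (hT.reach_root v hv).exists_mem_arcs hvr.symm
  exact notMem_leaves_of_mem_arcs hx

/-- Only a root adjacent to all other vertices could leave just itself out of the leaves. -/
lemma IsOutTreeOf.ncard_leaves_add_two_le (hT : T.IsOutTreeOf D r) (hV : 3 ≤ Nat.card V)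
    (hr : ∃ v ≠ r, (r, v) ∉ D.arcs) : T.leaves.ncard + 2 ≤ Nat.card V := by
  by_contra! hlt
  obtain ⟨v, hvr, hrv⟩ := hr
  obtain ⟨x, hx, hxr⟩ := Set.exists_ne_of_one_lt_ncard (s := T.leaves) (by omega) r
  have hsub : T.leaves ⊆ {r}ᶜ := fun y hy hyr =>
    hT.1.root_notMem_leaves hx.1 hxr (Set.mem_singleton_iff.1 hyr ▸ hy)
  have hcompl : ({r}ᶜ : Set V).ncard = Nat.card V - 1 := by
    rw [Set.ncard_compl, Set.ncard_singleton]
  have heq := Set.eq_of_subset_of_ncard_le hsub (by omega)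
  have hv : v ∈ T.leaves := heq ▸ hvr
  obtain ⟨u, hu⟩ := hT.1.exists_mem_arcs hv.1 hvr
  obtain rfl : u = r := by
    by_contra hur
    exact notMem_leaves_of_mem_arcs hu (heq ▸ hur)
  exact hrv (hT.2.2 hu)

end OutTree

section OfParent

variable {V : Type} {D : DirGraph V} {par : V → V} {r : V}

def ofParent (par : V → V) (r : V) : DirGraph V :=
  ⟨Set.univ, {a | a.2 ≠ r ∧ a.1 = par a.2}⟩

lemma mem_arcs_ofParent {u v : V} : (u, v) ∈ (ofParent par r).arcs ↔ v ≠ r ∧ u = par v :=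
  Iff.rfl

lemma isOutTree_ofParent (μ : V → ℕ) (hμ : ∀ v ≠ r, μ (par v) < μ v) :
    (ofParent par r).IsOutTree r := by
  refine ⟨fun _ _ => ⟨trivial, trivial⟩, trivial, ?_, fun v _ hvr => ?_, fun v _ => ?_⟩
  · have : {a ∈ (ofParent par r).arcs | a.2 = r} = ∅ :=
      Set.eq_empty_of_forall_notMem fun a ha => ha.1.1 ha.2
    rw [inDeg, this, Set.ncard_empty]
  · have : {a ∈ (ofParent par r).arcs | a.2 = v} = {(par v, v)} := by
      ext ⟨x, y⟩
      simp only [Set.mem_ofPred_eq, Set.mem_singleton_iff, Prod.mk.injEq, mem_arcs_ofParent]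
      constructor
      · rintro ⟨⟨-, rfl⟩, rfl⟩; exact ⟨rfl, rfl⟩
      · rintro ⟨rfl, rfl⟩; exact ⟨⟨hvr, rfl⟩, rfl⟩
    rw [inDeg, this, Set.ncard_singleton]
  · induction v using (measure μ).wf.induction with
    | h v ih =>
      by_cases hvr : v = r
      · exact hvr ▸ Reaches.refl trivial
      · exact (ih (par v) (hμ v hvr) trivial).snoc ⟨hvr, rfl⟩ trivial

lemma isOutBranching_ofParent (hD : D.verts = Set.univ) (harcs : ∀ v ≠ r, (par v, v) ∈ D.arcs)
    (μ : V → ℕ) (hμ : ∀ v ≠ r, μ (par v) < μ v) : (ofParent par r).IsOutBranching D r :=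
  ⟨⟨isOutTree_ofParent μ hμ, hD.symm ▸ subset_rfl, fun a ha => by
    rw [← Prod.mk.eta (p := a), ha.2]
    exact harcs a.2 ha.1⟩, hD.symm⟩

variable [Finite V] in
lemma leaves_ofParent : (ofParent par r).leaves = {v | ∀ y ≠ r, par y ≠ v} := by
  ext v
  simp only [leaves, outDeg, Set.ncard_eq_zero (Set.toFinite _), Set.eq_empty_iff_forall_notMem]
  constructor
  · rintro ⟨-, h⟩ y hyr rfl
    exact h (par y, y) ⟨⟨hyr, rfl⟩, rfl⟩
  · rintro h
    exact ⟨trivial, fun a ha => h a.2 ha.1.1 (ha.1.2 ▸ ha.2)⟩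

end OfParent

section HubDigraph

/-- Vertex `0` is the source, vertex `1` the hub, and `2 * i + p` (`1 ≤ i ≤ m`) the `i`-th vertex
of the path `p ∈ {0, 1}`. Both paths run from the source to the hub, which dominates all their
inner vertices. -/
def hubArc (m x y : ℕ) : Prop :=
  (x = 0 ∧ (y = 2 ∨ y = 3)) ∨ (2 ≤ x ∧ y = x + 2) ∨ (2 * m ≤ x ∧ y = 1) ∨ (x = 1 ∧ 2 ≤ y)

def hubDigraph (m : ℕ) : DirGraph (Fin (2 * m + 2)) :=
  ⟨Set.univ, {a | hubArc m a.1 a.2}⟩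

def hub (m : ℕ) : Fin (2 * m + 2) := ⟨1, by omega⟩

def pathInner (m : ℕ) (p : Fin 2) : Set (Fin (2 * m + 2)) := {v | 2 ≤ (v : ℕ) ∧ (v : ℕ) % 2 = p}

/-- The `i`-th vertex of the path `p`, for `i ≤ m`; the `0`-th one is the source. -/
def spine (m : ℕ) (p : Fin 2) (i : ℕ) : Fin (2 * m + 2) :=
  ⟨if i = 0 then 0 else 2 * min i m + p, by split_ifs <;> omega⟩

/-- Follow path `p` to the hub, then branch from the hub to the inner vertices of the other path. -/
def pathParent (m : ℕ) (p : Fin 2) (v : Fin (2 * m + 2)) : Fin (2 * m + 2) :=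
  ⟨if (v : ℕ) = 1 then 2 * m + p else if (v : ℕ) % 2 ≠ p then 1 else if 4 ≤ (v : ℕ) then v - 2
    else 0, by split_ifs <;> omega⟩

def pathTree (m : ℕ) (p : Fin 2) : DirGraph (Fin (2 * m + 2)) := ofParent (pathParent m p) 0

def hubStar (m : ℕ) : DirGraph (Fin (2 * m + 2)) :=
  ⟨{0}ᶜ, {a | a.1 = hub m ∧ 2 ≤ (a.2 : ℕ)}⟩

variable {m : ℕ} {T : DirGraph (Fin (2 * m + 2))} {r u v : Fin (2 * m + 2)}

@[simp] lemma val_hub : (hub m : ℕ) = 1 := rfl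

lemma val_spine (p : Fin 2) (i : ℕ) :
    (spine m p i : ℕ) = if i = 0 then 0 else 2 * min i m + p :=
  rfl

lemma mem_arcs_hubDigraph {x y : Fin (2 * m + 2)} :
    (x, y) ∈ (hubDigraph m).arcs ↔ hubArc m x y :=
  Iff.rfl

lemma wellFormed_hubDigraph (hm : 1 ≤ m) : (hubDigraph m).WellFormed := by
  rintro ⟨x, y⟩ h
  refine ⟨trivial, trivial, fun hxy => ?_⟩
  obtain rfl : x = y := hxy
  simp only [mem_arcs_hubDigraph, hubArc] at h
  omega

lemma ncard_pathInner (p : Fin 2) : (pathInner m p).ncard = m := by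
  have hrange : pathInner m p =
      Set.range fun i : Fin m => (⟨2 * (i + 1) + p, by omega⟩ : Fin (2 * m + 2)) := by
    ext v
    simp only [pathInner, Set.mem_ofPred_eq, Set.mem_range, Fin.ext_iff]
    constructor
    · rintro ⟨h2, hp⟩
      exact ⟨⟨(v : ℕ) / 2 - 1, by omega⟩, by simp only; omega⟩
    · rintro ⟨i, hi⟩
      omega
  rw [hrange, Set.ncard_range_of_injective fun i j h => Fin.ext (by simp only [Fin.mk.injEq] at h; omega),
    Nat.card_fin]

lemma isOutBranching_pathTree (hm : 1 ≤ m) (p : Fin 2) :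
    (pathTree m p).IsOutBranching (hubDigraph m) 0 := by
  -- the rank counts along path `p`, then the hub, then the other path
  refine isOutBranching_ofParent rfl (fun v hv => ?_)
    (fun v => if (v : ℕ) = 0 then 0 else if (v : ℕ) = 1 then m + 1
      else if (v : ℕ) % 2 = p then (v : ℕ) / 2 else m + 2) (fun v hv => ?_)
  all_goals
    have := v.isLt
    have hv0 : (v : ℕ) ≠ 0 := fun h => hv (Fin.ext h)
    simp only [mem_arcs_hubDigraph, hubArc, pathParent]
    split_ifs <;> omega

lemma leaves_pathTree (hm : 1 ≤ m) (p : Fin 2) : (pathTree m p).leaves = pathInner m p.rev := by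
  rw [pathTree, leaves_ofParent]
  ext v
  have := v.isLt
  simp only [pathInner, Fin.val_rev, Set.mem_ofPred_eq, pathParent, ne_eq, Fin.ext_iff,
    Fin.val_zero]
  constructor
  · intro h
    by_contra hv
    have hchild : (if (v : ℕ) = 0 then 2 + (p : ℕ) else if (v : ℕ) = 1 then 3 - (p : ℕ)
        else if (v : ℕ) + 2 < 2 * m + 2 then (v : ℕ) + 2 else 1) < 2 * m + 2 := by
      split_ifs <;> omega
    refine h ⟨_, hchild⟩ ?_ ?_ <;> dsimp only <;> split_ifs <;> first | omega | exact not_false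
  · rintro ⟨h2, hp⟩ y _
    split_ifs <;> omega

lemma exists_mem_arcs_pathTree {a : Fin (2 * m + 2) × Fin (2 * m + 2)}
    (ha : a ∈ (hubDigraph m).arcs) : ∃ p, a ∈ (pathTree m p).arcs := by
  obtain ⟨x, y⟩ := a
  rw [mem_arcs_hubDigraph, hubArc] at ha
  refine ⟨⟨if (y : ℕ) = 1 then x - 2 * m else if (x : ℕ) = 1 then 1 - y % 2 else y % 2,
    by split_ifs <;> omega⟩, ?_⟩
  simp only [pathTree, mem_arcs_ofParent, pathParent, ne_eq, Fin.ext_iff, Fin.val_zero]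
  have := x.isLt
  split_ifs <;> omega

lemma mem_verts_hubStar {v : Fin (2 * m + 2)} : v ∈ (hubStar m).verts ↔ (v : ℕ) ≠ 0 := by
  rw [hubStar, Set.mem_compl_singleton_iff, ne_eq, Fin.ext_iff, Fin.val_zero]

lemma isOutTreeOf_hubStar : (hubStar m).IsOutTreeOf (hubDigraph m) (hub m) := by
  have hhub : hub m ∈ (hubStar m).verts := mem_verts_hubStar.2 one_ne_zero
  refine ⟨⟨fun a ha => ⟨ha.1 ▸ hhub, mem_verts_hubStar.2 (by have := ha.2; omega)⟩, hhub, ?_,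
    fun v hv hvh => ?_, fun v hv => ?_⟩, Set.subset_univ _, fun a ha => ?_⟩
  · refine (Set.ncard_eq_zero (Set.toFinite _)).2 (Set.eq_empty_of_forall_notMem fun a ha => ?_)
    have := ha.1.2
    rw [ha.2, val_hub] at this
    omega
  · have hv2 : 2 ≤ (v : ℕ) := by
      rw [mem_verts_hubStar] at hv
      have : (v : ℕ) ≠ 1 := fun h => hvh (Fin.ext h)
      omega
    have : {a ∈ (hubStar m).arcs | a.2 = v} = {(hub m, v)} := by
      ext ⟨x, y⟩
      simp only [hubStar, Set.mem_ofPred_eq, Set.mem_singleton_iff, Prod.mk.injEq]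
      constructor
      · rintro ⟨⟨rfl, -⟩, rfl⟩; exact ⟨rfl, rfl⟩
      · rintro ⟨rfl, rfl⟩; exact ⟨⟨rfl, hv2⟩, rfl⟩
    rw [inDeg, this, Set.ncard_singleton]
  · by_cases hvh : v = hub m
    · rw [hvh]; exact Reaches.refl hhub
    · refine (Reaches.refl hhub).snoc ⟨rfl, show 2 ≤ (v : ℕ) from ?_⟩ hv
      rw [mem_verts_hubStar] at hv
      have : (v : ℕ) ≠ 1 := fun h => hvh (Fin.ext h)
      omega
  · obtain ⟨x, y⟩ := a
    obtain ⟨rfl, hy⟩ := ha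
    exact Or.inr (Or.inr (Or.inr ⟨rfl, hy⟩))

lemma leaves_hubStar (hm : 1 ≤ m) : (hubStar m).leaves = pathInner m 0 ∪ pathInner m 1 := by
  ext v
  constructor
  · intro hv
    have h0 := mem_verts_hubStar.1 hv.1
    have h1 : (v : ℕ) ≠ 1 := fun h => by
      obtain rfl : v = hub m := Fin.ext h
      exact notMem_leaves_of_mem_arcs (T := hubStar m) (v := ⟨2, by omega⟩) ⟨rfl, le_rfl⟩ hv
    simp only [pathInner, Set.mem_union, Set.mem_ofPred_eq, Fin.isValue, Fin.val_zero, Fin.val_one]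
    omega
  · intro hv
    have h2 : 2 ≤ (v : ℕ) := by rcases hv with h | h <;> exact h.1
    refine ⟨mem_verts_hubStar.2 (by omega), (Set.ncard_eq_zero (Set.toFinite _)).2
      (Set.eq_empty_of_forall_notMem fun a ha => ?_)⟩
    have := congrArg Fin.val (ha.1.1.symm.trans ha.2)
    rw [val_hub] at this
    omega

lemma ncard_leaves_hubStar (hm : 1 ≤ m) : (hubStar m).leaves.ncard = 2 * m := by
  rw [leaves_hubStar hm, Set.ncard_union_eq, ncard_pathInner, ncard_pathInner, two_mul]
  exact Set.disjoint_left.2 fun v h0 h1 => absurd (h0.2.symm.trans h1.2) (by simp)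

lemma hub_ne_zero : hub m ≠ 0 := fun h => by
  simpa using congrArg Fin.val h

lemma notMem_arcs_hubDigraph_zero : (u, 0) ∉ (hubDigraph m).arcs := by
  rw [mem_arcs_hubDigraph, hubArc, Fin.val_zero]
  omega

lemma ncard_leaves_le_of_isOutTreeOf (hm : 1 ≤ m) (hT : T.IsOutTreeOf (hubDigraph m) r) :
    T.leaves.ncard ≤ 2 * m := by
  suffices ∃ v ≠ r, (r, v) ∉ (hubDigraph m).arcs by
    have := hT.ncard_leaves_add_two_le (by rw [Nat.card_fin]; omega) this
    rw [Nat.card_fin] at this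
    omega
  by_cases hr : r = 0
  · refine ⟨hub m, hr ▸ hub_ne_zero, ?_⟩
    rw [hr, mem_arcs_hubDigraph, hubArc, val_hub, Fin.val_zero]
    omega
  · exact ⟨0, Ne.symm hr, notMem_arcs_hubDigraph_zero⟩

/-- The path `p` from the source to the hub is forced into `T` once its last arc is. -/
lemma notMem_leaves_of_spine (hm : 1 ≤ m) (hT : T.IsOutBranching (hubDigraph m) 0) {p : Fin 2}
    (hp : (spine m p m, hub m) ∈ T.arcs) (hv : (v : ℕ) = 0 ∨ v ∈ pathInner m p) :
    v ∉ T.leaves := by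
  have hf := hT.1.1.mem_arcs_of_forced (spine m p) m hp fun i hi => by
    refine ⟨fun h => ?_, fun x hx => ?_⟩
    · have := congrArg Fin.val h
      rw [val_spine, Fin.val_zero] at this
      split_ifs at this <;> omega
    · have := hT.1.2.2 hx
      have hs : (spine m p (i + 1) : ℕ) = 2 * (i + 1) + p := by
        rw [val_spine, if_neg (by omega), min_eq_left (by omega)]
      rw [mem_arcs_hubDigraph, hubArc, hs] at this
      rw [Fin.ext_iff, Fin.ext_iff, val_spine, val_hub]
      split_ifs <;> omega
  obtain ⟨i, hi, rfl⟩ : ∃ i ≤ m, spine m p i = v := by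
    refine ⟨(v : ℕ) / 2, ?_, Fin.ext ?_⟩ <;> simp only [pathInner, Set.mem_ofPred_eq] at hv
    · omega
    · rw [val_spine]; split_ifs <;> omega
  rcases hi.lt_or_eq with hi | rfl
  · exact notMem_leaves_of_mem_arcs (hf i hi)
  · exact notMem_leaves_of_mem_arcs hp

lemma notMem_leaves_of_hub_mem_leaves (hT : T.IsOutBranching (hubDigraph m) 0)
    (hhub : hub m ∈ T.leaves) (hv : 2 ≤ (v : ℕ)) (hv' : (v : ℕ) < 2 * m) : v ∉ T.leaves := by
  obtain ⟨y, hy⟩ : ∃ y : Fin (2 * m + 2), (y : ℕ) = v + 2 := ⟨⟨v + 2, by omega⟩, rfl⟩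
  obtain ⟨x, hx⟩ := hT.1.1.exists_mem_arcs (v := y) (by rw [hT.2]; trivial)
    fun h => by rw [h, Fin.val_zero] at hy; omega
  have := hT.1.2.2 hx
  rw [mem_arcs_hubDigraph, hubArc, hy] at this
  obtain rfl | rfl : x = v ∨ x = hub m := by
    simp only [Fin.ext_iff, val_hub]
    omega
  · exact notMem_leaves_of_mem_arcs hx
  · exact absurd hhub (notMem_leaves_of_mem_arcs hx)

lemma ncard_leaves_le_of_isOutBranching (hm : 2 ≤ m) (hT : T.IsOutBranching (hubDigraph m) r) :
    T.leaves.ncard ≤ m := by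
  obtain rfl : 0 = r := hT.eq_root trivial fun _ => notMem_arcs_hubDigraph_zero
  obtain ⟨u, hu⟩ := hT.1.1.exists_mem_arcs (by rw [hT.2]; trivial) hub_ne_zero
  have hu2 : 2 * m ≤ (u : ℕ) := by
    have := hT.1.2.2 hu
    rw [mem_arcs_hubDigraph, hubArc, val_hub] at this
    omega
  obtain ⟨p, rfl⟩ : ∃ p : Fin 2, spine m p m = u :=
    ⟨⟨u - 2 * m, by omega⟩, Fin.ext <| by
      rw [val_spine, if_neg (by omega), min_self]
      exact Nat.add_sub_cancel' hu2⟩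
  have hleaf : ∀ v ∈ T.leaves, v = hub m ∨ v ∈ pathInner m p.rev := by
    intro v hv
    by_cases h1 : (v : ℕ) = 1
    · exact Or.inl (Fin.ext h1)
    · refine Or.inr (by_contra fun h => notMem_leaves_of_spine (by omega) hT hu ?_ hv)
      simp only [pathInner, Set.mem_ofPred_eq, Fin.val_rev] at h ⊢
      omega
  by_cases hhub : hub m ∈ T.leaves
  · have hsub : T.leaves ⊆ {hub m, spine m p.rev m} := by
      intro v hv
      rcases hleaf v hv with rfl | ⟨h2, hp⟩
      · exact Set.mem_insert _ _
      · refine Set.mem_insert_of_mem _ (Fin.ext ?_)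
        by_contra h
        rw [val_spine, if_neg (by omega), min_self, Fin.val_rev] at h
        rw [Fin.val_rev] at hp
        exact notMem_leaves_of_hub_mem_leaves hT hhub h2 (by omega) hv
    calc T.leaves.ncard ≤ ({hub m, spine m p.rev m} : Set _).ncard := Set.ncard_le_ncard hsub
      _ ≤ 2 := (Set.ncard_insert_le _ _).trans (by rw [Set.ncard_singleton])
      _ ≤ m := hm
  · calc T.leaves.ncard ≤ (pathInner m p.rev).ncard :=
          Set.ncard_le_ncard fun v hv => (hleaf v hv).resolve_left (by rintro rfl; exact hhub hv)
      _ = m := ncard_pathInner _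

end HubDigraph

theorem exists_digraph_ratio_two (m : ℕ) (hm : 2 ≤ m) :
    ∃ D : DirGraph (Fin (2 * m + 2)),
      D.WellFormed ∧ D.verts = Set.univ ∧
      (∃ (T : DirGraph (Fin (2 * m + 2))) (r : Fin (2 * m + 2)),
        IsOutBranching T D r) ∧
      (∀ a ∈ D.arcs, ¬ Useless D a) ∧
      ell D = 2 * m ∧ ellS D = m := by
  have hm1 : 1 ≤ m := by omega
  refine ⟨hubDigraph m, wellFormed_hubDigraph hm1, rfl, ⟨_, _, isOutBranching_pathTree hm1 0⟩,
    fun a ha hU => ?_, ?_, ?_⟩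
  · obtain ⟨p, hp⟩ := exists_mem_arcs_pathTree ha
    exact hU _ _ (isOutBranching_pathTree hm1 p) hp
  · refine IsGreatest.csSup_eq
      ⟨⟨hubStar m, hub m, isOutTreeOf_hubStar, ncard_leaves_hubStar hm1⟩, ?_⟩
    rintro _ ⟨T, r, hT, rfl⟩
    exact ncard_leaves_le_of_isOutTreeOf hm1 hT
  · refine IsGreatest.csSup_eq ⟨⟨pathTree m 0, 0, isOutBranching_pathTree hm1 0, ?_⟩, ?_⟩
    · rw [leaves_pathTree hm1, ncard_pathInner]
    · rintro _ ⟨T, r, hT, rfl⟩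
      exact ncard_leaves_le_of_isOutBranching hm hT

end DirGraph
end

section
/- Let D be a digraph, let T be an out-tree of D with root r, let r' be a vertex of D with R_D(r') = V(D), and let P be a dipath in D from r' to r. Then D has an out-branching with at least |Leaf(T) \ V(P)| leaves. -/
/-!
Reroot `T` along `P`: the dipath `P` from `r'` to `r`, together with the arcs of `T` whose heads
lie off `P`, is an out-tree rooted at `r'` in which every leaf of `T` off `P` is still a leaf.
Since every vertex is reachable from `r'`, this out-tree grows into an out-branching by adding
one arc leaving it at a time; each such arc creates a new leaf and destroys at most one.
-/

namespace DirGraph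

variable {V : Type}

section ListArcs

lemma mem_listArcs_cons_cons {x y : V} {t : List V} {a : V × V} :
    a ∈ listArcs (x :: y :: t) ↔ a = (x, y) ∨ a ∈ listArcs (y :: t) :=
  List.mem_cons

lemma mem_listArcs {l : List V} {a : V × V} (h : a ∈ listArcs l) : a.1 ∈ l ∧ a.2 ∈ l.tail :=
  List.of_mem_zip h

lemma isChain_mem_listArcs : ∀ l : List V, l.IsChain fun u v => (u, v) ∈ listArcs l
  | [] => .nil
  | [_] => .singleton _
  | _ :: y :: t => .cons_cons (mem_listArcs_cons_cons.2 (.inl rfl))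
      ((isChain_mem_listArcs (y :: t)).imp fun _ _ h => mem_listArcs_cons_cons.2 (.inr h))

lemma listArcs_subset_of_isChain {A : Set (V × V)} :
    ∀ {l : List V}, l.IsChain (fun u v => (u, v) ∈ A) → listArcs l ⊆ A
  | [], _, _, h => by simp [listArcs] at h
  | [_], _, _, h => by simp [listArcs] at h
  | x :: y :: t, h, a, ha => by
    rw [List.isChain_cons_cons] at h
    rcases mem_listArcs_cons_cons.1 ha with rfl | ha
    exacts [h.1, listArcs_subset_of_isChain h.2 ha]

lemma exists_mem_listArcs_of_mem_tail :
    ∀ {l : List V} {v : V}, v ∈ l.tail → ∃ u, (u, v) ∈ listArcs l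
  | [], _, h | [_], _, h => by simp at h
  | x :: y :: t, v, hv => by
    rcases List.mem_cons.1 hv with rfl | hv
    · exact ⟨x, mem_listArcs_cons_cons.2 (.inl rfl)⟩
    · obtain ⟨u, hu⟩ := exists_mem_listArcs_of_mem_tail (l := y :: t) hv
      exact ⟨u, mem_listArcs_cons_cons.2 (.inr hu)⟩

lemma eq_of_mem_listArcs_of_nodup :
    ∀ {l : List V}, l.Nodup → ∀ {u u' v : V}, (u, v) ∈ listArcs l → (u', v) ∈ listArcs l → u = u'
  | [], _, _, _, _, h, _ | [_], _, _, _, _, h, _ => by simp [listArcs] at h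
  | x :: y :: t, hl, u, u', v, h, h' => by
    have hy : y ∉ t := (List.nodup_cons.1 (List.nodup_cons.1 hl).2).1
    rcases mem_listArcs_cons_cons.1 h with h | h <;>
      rcases mem_listArcs_cons_cons.1 h' with h' | h'
    · exact (Prod.mk.inj h).1.trans (Prod.mk.inj h').1.symm
    · simp only [Prod.mk.injEq] at h; exact absurd (h.2 ▸ (mem_listArcs h').2) hy
    · simp only [Prod.mk.injEq] at h'; exact absurd (h'.2 ▸ (mem_listArcs h).2) hy
    · exact eq_of_mem_listArcs_of_nodup (List.nodup_cons.1 hl).2 h h'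

end ListArcs

section Degrees

lemma inDeg_congr {D D' : DirGraph V} {v : V} (h : ∀ u, (u, v) ∈ D.arcs ↔ (u, v) ∈ D'.arcs) :
    D.inDeg v = D'.inDeg v := by
  unfold inDeg
  congr 1
  ext ⟨u, w⟩
  constructor <;> rintro ⟨ha, rfl : w = v⟩
  exacts [⟨(h u).1 ha, rfl⟩, ⟨(h u).2 ha, rfl⟩]

lemma inDeg_eq_zero_of_forall {D : DirGraph V} {v : V} (h : ∀ u, (u, v) ∉ D.arcs) :
    D.inDeg v = 0 := by
  have : {a ∈ D.arcs | a.2 = v} = ∅ := by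
    ext ⟨u, w⟩
    simp only [Set.mem_ofPred_eq, Set.mem_empty_iff_false, iff_false, not_and]
    rintro ha rfl
    exact h u ha
  rw [inDeg, this, Set.ncard_empty]

lemma inDeg_eq_one_of_unique {D : DirGraph V} {u v : V} (hu : (u, v) ∈ D.arcs)
    (huniq : ∀ u', (u', v) ∈ D.arcs → u' = u) : D.inDeg v = 1 := by
  rw [inDeg, Set.ncard_eq_one]
  refine ⟨(u, v), ?_⟩
  ext ⟨u', w⟩
  simp only [Set.mem_ofPred_eq, Set.mem_singleton_iff, Prod.mk.injEq]
  constructor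
  · rintro ⟨ha, rfl⟩
    exact ⟨huniq u' ha, rfl⟩
  · rintro ⟨rfl, rfl⟩
    exact ⟨hu, rfl⟩

lemma mem_leaves [Finite V] {D : DirGraph V} {v : V} :
    v ∈ leaves D ↔ v ∈ D.verts ∧ ∀ w, (v, w) ∉ D.arcs := by
  rw [leaves, Set.mem_sep_iff, outDeg, Set.ncard_eq_zero, Set.eq_empty_iff_forall_notMem]
  refine and_congr_right fun _ => ⟨fun h w hw => h (v, w) ⟨hw, rfl⟩, ?_⟩
  rintro h ⟨a, w⟩ ⟨ha, rfl : a = v⟩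
  exact h w ha

end Degrees

section Reachability

variable {D D' : DirGraph V}

lemma IsDipath.mono (hV : D.verts ⊆ D'.verts) (hA : D.arcs ⊆ D'.arcs) {l : List V}
    (h : D.IsDipath l) : D'.IsDipath l :=
  ⟨h.1, h.2.1, fun v hv => hV (h.2.2.1 v hv), List.IsChain.imp (fun _ _ hab => hA hab) h.2.2.2⟩

lemma Reaches.mono (hV : D.verts ⊆ D'.verts) (hA : D.arcs ⊆ D'.arcs) {u v : V}
    (h : D.Reaches u v) : D'.Reaches u v :=
  let ⟨l, hl, hu, hv⟩ := h
  ⟨l, hl.mono hV hA, hu, hv⟩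

lemma IsDipath.reaches_of_mem {l : List V} (hl : D.IsDipath l) {u v : V}
    (hu : l.head? = some u) (hv : v ∈ l) : D.Reaches u v := by
  obtain ⟨-, hnd, hmem, hch⟩ := hl
  obtain ⟨s, t, rfl⟩ := List.append_of_mem hv
  have hpre : s ++ [v] <+: s ++ v :: t := ⟨t, by simp⟩
  refine ⟨s ++ [v], ⟨by simp, hnd.sublist hpre.sublist, fun x hx => hmem x (hpre.subset hx),
    List.IsChain.prefix hch hpre⟩, ?_, by simp⟩
  rw [← hu]
  cases s <;> rfl

lemma Reaches.tail {u y v : V} (h : D.Reaches u y) (hyv : (y, v) ∈ D.arcs)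
    (hv : v ∈ D.verts) : D.Reaches u v := by
  obtain ⟨m, hm, hu, hy⟩ := h
  by_cases hvm : v ∈ m
  · exact hm.reaches_of_mem hu hvm
  obtain ⟨hne, hnd, hmem, hch⟩ := hm
  refine ⟨m ++ [v], ⟨by simp, ?_, ?_, ?_⟩, ?_, by simp⟩
  · exact hnd.append (List.nodup_singleton v) (List.disjoint_singleton.2 hvm)
  · simpa [or_imp, forall_and, hv] using hmem
  · exact List.IsChain.append hch (.singleton v) (by simpa [hy])
  · rwa [List.head?_append_of_ne_nil _ hne]

lemma reachSet_subset {S : Set V} {u : V} (hu : u ∈ S)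
    (hS : ∀ x y, (x, y) ∈ D.arcs → x ∈ S → y ∈ D.verts → y ∈ S) : D.reachSet u ⊆ S := by
  rintro v ⟨m, ⟨-, -, hmem, hch⟩, hmu, hmv⟩
  have hch' : m.IsChain fun x y => (x, y) ∈ D.arcs ∧ y ∈ D.verts :=
    List.IsChain.imp_of_mem_imp (fun _ y _ hy hxy => ⟨hxy, hmem y hy⟩) hch
  refine hch'.induction (· ∈ S) m (fun x y hxy hx => hS x y hxy.1 hx hxy.2) (fun hne => ?_) v
    (List.mem_of_getLast? hmv)
  rwa [Option.some_inj.1 ((List.head?_eq_some_head hne).symm.trans hmu)]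

lemma exists_arc_leaving {S : Set V} {r : V} (hr : D.verts ⊆ D.reachSet r) (hrS : r ∈ S)
    (hS : ¬ D.verts ⊆ S) : ∃ x y, (x, y) ∈ D.arcs ∧ x ∈ S ∧ y ∈ D.verts ∧ y ∉ S := by
  by_contra! h
  exact hS (hr.trans (reachSet_subset hrS h))

end Reachability

section AddLeaf

def addLeaf (T : DirGraph V) (u w : V) : DirGraph V :=
  ⟨insert w T.verts, insert (u, w) T.arcs⟩

variable {T D : DirGraph V} {r u w : V}

lemma inDeg_addLeaf_of_ne {v : V} (hv : v ≠ w) : (T.addLeaf u w).inDeg v = T.inDeg v :=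
  inDeg_congr fun x => by simp [addLeaf, hv]

lemma IsOutTree.addLeaf (hT : T.IsOutTree r) (hu : u ∈ T.verts) (hw : w ∉ T.verts) :
    (T.addLeaf u w).IsOutTree r where
  arcs_mem := by
    rintro a (rfl | ha)
    · exact ⟨.inr hu, .inl rfl⟩
    · exact ⟨.inr (hT.arcs_mem a ha).1, .inr (hT.arcs_mem a ha).2⟩
  root_mem := .inr hT.root_mem
  root_indeg := by
    rw [inDeg_addLeaf_of_ne (ne_of_mem_of_not_mem hT.root_mem hw), hT.root_indeg]
  indeg_one := by
    rintro v (rfl | hv) hvr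
    · refine inDeg_eq_one_of_unique (.inl rfl) fun x hx => ?_
      rcases hx with hx | hx
      · exact (Prod.mk.inj hx).1
      · exact absurd (hT.arcs_mem _ hx).2 hw
    · rw [inDeg_addLeaf_of_ne (ne_of_mem_of_not_mem hv hw)]
      exact hT.indeg_one v hv hvr
  reach_root := by
    have hsub : T.verts ⊆ (T.addLeaf u w).verts ∧ T.arcs ⊆ (T.addLeaf u w).arcs :=
      ⟨Set.subset_insert _ _, Set.subset_insert _ _⟩
    rintro v (rfl | hv)
    · exact ((hT.reach_root u hu).mono hsub.1 hsub.2).tail (.inl rfl) (.inl rfl)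
    · exact (hT.reach_root v hv).mono hsub.1 hsub.2

lemma IsOutTreeOf.addLeaf (hT : T.IsOutTreeOf D r) (hu : u ∈ T.verts) (hw : w ∉ T.verts)
    (huw : (u, w) ∈ D.arcs) (hwD : w ∈ D.verts) : (T.addLeaf u w).IsOutTreeOf D r :=
  ⟨hT.1.addLeaf hu hw, Set.insert_subset hwD hT.2.1, Set.insert_subset huw hT.2.2⟩

lemma IsOutTree.ncard_leaves_le_addLeaf [Finite V] (hT : T.IsOutTree r) (hu : u ∈ T.verts)
    (hw : w ∉ T.verts) :
    (leaves T).ncard ≤ (leaves (T.addLeaf u w)).ncard := by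
  have hwu : w ≠ u := (ne_of_mem_of_not_mem hu hw).symm
  have hw_leaf : w ∈ leaves (T.addLeaf u w) := by
    refine mem_leaves.2 ⟨.inl rfl, fun x hx => ?_⟩
    rcases hx with hx | hx
    · exact hwu (Prod.mk.inj hx).1
    · exact hw (hT.arcs_mem _ hx).1
  have hsub : leaves T ⊆ insert u (leaves (T.addLeaf u w) \ {w}) := by
    intro v hv
    obtain ⟨hvT, hvout⟩ := mem_leaves.1 hv
    by_cases hvu : v = u
    · exact .inl hvu
    refine .inr ⟨mem_leaves.2 ⟨.inr hvT, fun x hx => ?_⟩, ne_of_mem_of_not_mem hvT hw⟩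
    rcases hx with hx | hx
    · exact hvu (Prod.mk.inj hx).1
    · exact hvout x hx
  calc (leaves T).ncard ≤ (insert u (leaves (T.addLeaf u w) \ {w})).ncard :=
        Set.ncard_le_ncard hsub
    _ ≤ (leaves (T.addLeaf u w) \ {w}).ncard + 1 := Set.ncard_insert_le _ _
    _ = (leaves (T.addLeaf u w)).ncard := Set.ncard_sdiff_singleton_add_one hw_leaf

end AddLeaf

theorem exists_outBranching_of_isOutTreeOf [Finite V] {D T : DirGraph V} {r : V}
    (hr : D.verts ⊆ D.reachSet r) (hT : T.IsOutTreeOf D r) :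
    ∃ T', T'.IsOutBranching D r ∧ (leaves T).ncard ≤ (leaves T').ncard := by
  by_cases hspan : D.verts ⊆ T.verts
  · exact ⟨T, ⟨hT, hT.2.1.antisymm hspan⟩, le_rfl⟩
  obtain ⟨u, w, huw, hu, hwD, hw⟩ := exists_arc_leaving hr hT.1.root_mem hspan
  obtain ⟨T', hT', hle⟩ := exists_outBranching_of_isOutTreeOf hr (hT.addLeaf hu hw huw hwD)
  exact ⟨T', hT', (hT.1.ncard_leaves_le_addLeaf hu hw).trans hle⟩
termination_by (D.verts \ T.verts).ncard
decreasing_by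
  refine Set.ncard_lt_ncard ((Set.ssubset_iff_of_subset ?_).2
    ⟨w, ⟨hwD, hw⟩, fun h => h.2 (.inl rfl)⟩)
  exact Set.sdiff_subset_sdiff_right (Set.subset_insert _ _)

section Graft

def pathGraph (l : List V) : DirGraph V := ⟨{v | v ∈ l}, listArcs l⟩

lemma isOutTree_pathGraph {l : List V} {x : V} (hl : l.Nodup) (hx : l.head? = some x) :
    (pathGraph l).IsOutTree x := by
  obtain ⟨t, rfl⟩ := List.head?_eq_some_iff.1 hx
  refine
    { arcs_mem := fun a ha => ⟨(mem_listArcs ha).1, List.mem_of_mem_tail (mem_listArcs ha).2⟩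
      root_mem := List.mem_cons_self
      root_indeg :=
        inDeg_eq_zero_of_forall fun _ hu => (List.nodup_cons.1 hl).1 (mem_listArcs hu).2
      indeg_one := fun v hv hvx => ?_
      reach_root := fun v hv => IsDipath.reaches_of_mem (D := pathGraph (x :: t))
        ⟨List.cons_ne_nil _ _, hl, fun _ h => h, isChain_mem_listArcs _⟩ hx hv }
  obtain ⟨u, hu⟩ :=
    exists_mem_listArcs_of_mem_tail (l := x :: t) ((List.mem_cons.1 hv).resolve_left hvx)
  exact inDeg_eq_one_of_unique hu fun u' hu' => eq_of_mem_listArcs_of_nodup hl hu' hu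

lemma IsDipath.isOutTreeOf_pathGraph {D : DirGraph V} {l : List V} {x : V} (hl : D.IsDipath l)
    (hx : l.head? = some x) : (pathGraph l).IsOutTreeOf D x :=
  ⟨isOutTree_pathGraph hl.2.1 hx, hl.2.2.1, listArcs_subset_of_isChain hl.2.2.2⟩

def graft (P T : DirGraph V) : DirGraph V :=
  ⟨P.verts ∪ T.verts, P.arcs ∪ {a ∈ T.arcs | a.2 ∉ P.verts}⟩

variable {D P T : DirGraph V} {p r v : V}

lemma inDeg_graft_of_mem (hv : v ∈ P.verts) : (P.graft T).inDeg v = P.inDeg v :=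
  inDeg_congr fun _ => ⟨fun h => h.elim id fun h => absurd hv h.2, .inl⟩

lemma inDeg_graft_of_notMem (hP : ∀ a ∈ P.arcs, a.1 ∈ P.verts ∧ a.2 ∈ P.verts)
    (hv : v ∉ P.verts) : (P.graft T).inDeg v = T.inDeg v :=
  inDeg_congr fun _ => ⟨fun h => h.elim (fun h => absurd (hP _ h).2 hv) And.left,
    fun h => .inr ⟨h, hv⟩⟩

lemma IsOutTree.graft (hP : P.IsOutTree p) (hT : T.IsOutTree r) (hr : r ∈ P.verts) :
    (P.graft T).IsOutTree p where
  arcs_mem := by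
    rintro a (ha | ⟨ha, -⟩)
    · exact ⟨.inl (hP.arcs_mem a ha).1, .inl (hP.arcs_mem a ha).2⟩
    · exact ⟨.inr (hT.arcs_mem a ha).1, .inr (hT.arcs_mem a ha).2⟩
  root_mem := .inl hP.root_mem
  root_indeg := (inDeg_graft_of_mem hP.root_mem).trans hP.root_indeg
  indeg_one v hv hvp := by
    by_cases hvP : v ∈ P.verts
    · rw [inDeg_graft_of_mem hvP]
      exact hP.indeg_one v hvP hvp
    · rw [inDeg_graft_of_notMem hP.arcs_mem hvP]
      exact hT.indeg_one v (hv.resolve_left hvP) (ne_of_mem_of_not_mem hr hvP).symm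
  reach_root := by
    have hreachP : ∀ v ∈ P.verts, (P.graft T).Reaches p v := fun v hv =>
      (hP.reach_root v hv).mono Set.subset_union_left Set.subset_union_left
    rintro v (hv | hv)
    · exact hreachP v hv
    -- Following a dipath of `T` from `r`, each arc either enters `P` or is kept in the graft.
    refine reachSet_subset (S := (P.graft T).reachSet p) (hreachP r hr)
      (fun x y hxy hx hy => ?_) (hT.reach_root v hv)
    by_cases hyP : y ∈ P.verts
    · exact hreachP y hyP
    · exact Reaches.tail hx (.inr ⟨hxy, hyP⟩) (.inr hy)

lemma IsOutTreeOf.graft (hP : P.IsOutTreeOf D p) (hT : T.IsOutTreeOf D r) (hr : r ∈ P.verts) :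
    (P.graft T).IsOutTreeOf D p :=
  ⟨hP.1.graft hT.1 hr, Set.union_subset hP.2.1 hT.2.1,
    Set.union_subset hP.2.2 fun _ ha => hT.2.2 ha.1⟩

lemma leaves_diff_subset_leaves_graft [Finite V]
    (hP : ∀ a ∈ P.arcs, a.1 ∈ P.verts ∧ a.2 ∈ P.verts) :
    leaves T \ P.verts ⊆ leaves (P.graft T) := by
  rintro v ⟨hv, hvP⟩
  obtain ⟨hvT, hvout⟩ := mem_leaves.1 hv
  refine mem_leaves.2 ⟨.inr hvT, fun w hw => ?_⟩
  rcases hw with hw | ⟨hw, -⟩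
  exacts [hvP (hP _ hw).1, hvout w hw]

end Graft

theorem outBranching_of_outTree_and_dipath_general {V : Type} [Fintype V]
    (D T : DirGraph V) (r r' : V) (l : List V)
    (hT : IsOutTreeOf T D r)
    (hr' : reachSet D r' = D.verts)
    (hP : D.IsDipath l) (hh : l.head? = some r') (hl : l.getLast? = some r) :
    ∃ (T' : DirGraph V) (r'' : V), IsOutBranching T' D r'' ∧
      (leaves T \ {v | v ∈ l}).ncard ≤ (leaves T').ncard := by
  have hpath := hP.isOutTreeOf_pathGraph hh
  obtain ⟨T', hT', hle⟩ :=
    exists_outBranching_of_isOutTreeOf hr'.ge (hpath.graft hT (List.mem_of_getLast? hl))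
  exact ⟨T', r', hT',
    (Set.ncard_le_ncard (leaves_diff_subset_leaves_graft hpath.1.arcs_mem)).trans hle⟩

theorem outBranching_of_outTree_and_dipath {V : Type} [Fintype V]
    (D T : DirGraph V) (r r' : V) (l : List V) (hD : D.WellFormed)
    (hT : IsOutTreeOf T D r)
    (hr' : reachSet D r' = D.verts)
    (hP : D.IsDipath l) (hh : l.head? = some r') (hl : l.getLast? = some r) :
    ∃ (T' : DirGraph V) (r'' : V), IsOutBranching T' D r'' ∧
      (leaves T \ {v | v ∈ l}).ncard ≤ (leaves T').ncard :=
  outBranching_of_outTree_and_dipath_general D T r r' l hT hr' hP hh hl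

end DirGraph
end
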